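/- Fix n ≥ 3, set γ := 2 − 2/n, let α ∈ (0, γ − 1), and let h(t) := (1 − t²)^{−α} for |t| < 1. Let X := ℝ^{n−1} × (−1, 1) ⊆ ℝⁿ and define u : X → ℝ by u(x', x_n) := |x'|^γ h(x_n). Then u is convex on X, and u vanishes identically on the segment {0} × (−1, 1); in particular u is not strictly convex on X. -/

import Mathlib

/-! With `γ = 2 - 2/n` and `β = α / (γ - 1) ∈ (0, 1)` we have `u(x) = |x'|^γ ψ(x_n)^(1-γ)`, where
`ψ(t) = (1 - t²)^β` is concave and positive on `(-1, 1)`. The map `(r, c) ↦ r^γ c^(1-γ) = c (r/c)^γ`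
is the perspective of `r ↦ r^γ`, hence jointly convex; it is increasing in `r` and decreasing in
`c`, so composing it with the convex `|x'|` and the concave `ψ(x_n)` gives a convex function.
As `u ≥ 0` vanishes at two distinct points of the axis `x' = 0`, both are minimisers, which a
strictly convex function cannot have. -/

open MeasureTheory Set
open scoped InnerProductSpace ENNReal

/-- `h(t) = (1 − t²)^{−α}`. -/
noncomputable def hPog (α t : ℝ) : ℝ := (1 - t ^ 2) ^ (-α)

/-- The last coordinate `x_n` of `x ∈ ℝⁿ`. -/
def lastCoord (n : ℕ) (hn : 3 ≤ n) (x : EuclideanSpace ℝ (Fin n)) : ℝ :=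
  x ⟨n - 1, by omega⟩

/-- The Euclidean norm `|x'|` of the first `n − 1` coordinates of `x ∈ ℝⁿ`. -/
noncomputable def primeNorm (n : ℕ) (x : EuclideanSpace ℝ (Fin n)) : ℝ :=
  Real.sqrt (∑ i : Fin n, if (i : ℕ) = n - 1 then 0 else x i ^ 2)

/-- The Pogorelov-type function `u(x', x_n) = |x'|^γ h(x_n)` with `γ = 2 − 2/n`. -/
noncomputable def uPog (n : ℕ) (hn : 3 ≤ n) (α : ℝ) (x : EuclideanSpace ℝ (Fin n)) : ℝ :=
  primeNorm n x ^ (2 - 2 / (n : ℝ)) * hPog α (lastCoord n hn x)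

/-- The slab `X = ℝ^{n−1} × (−1, 1)`. -/
def XPog (n : ℕ) (hn : 3 ≤ n) : Set (EuclideanSpace ℝ (Fin n)) :=
  {x | lastCoord n hn x ∈ Set.Ioo (-1 : ℝ) 1}

theorem ConvexOn.perspective {E : Type*} [AddCommGroup E] [Module ℝ E] {s : Set E} {f : E → ℝ}
    (hf : ConvexOn ℝ s f) :
    ConvexOn ℝ {p : E × ℝ | 0 < p.2 ∧ p.2⁻¹ • p.1 ∈ s} (fun p => p.2 * f (p.2⁻¹ • p.1)) := by
  have key : ∀ ⦃p q : E × ℝ⦄, 0 < p.2 → 0 < q.2 → ∀ ⦃a b : ℝ⦄, 0 ≤ a → 0 ≤ b → a + b = 1 →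
      0 < a * p.2 + b * q.2 ∧
      (a * p.2 + b * q.2)⁻¹ • (a • p.1 + b • q.1) =
        (a * p.2 / (a * p.2 + b * q.2)) • (p.2⁻¹ • p.1) +
          (b * q.2 / (a * p.2 + b * q.2)) • (q.2⁻¹ • q.1) := by
    intro p q hp hq a b ha hb hab
    have hc : 0 < a * p.2 + b * q.2 := by
      simpa using (convex_Ioi (0 : ℝ)) hp hq ha hb hab
    refine ⟨hc, ?_⟩
    simp only [smul_add, smul_smul]
    congr 2 <;> field_simp
  refine ⟨?_, ?_⟩
  · rintro p ⟨hp, hps⟩ q ⟨hq, hqs⟩ a b ha hb hab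
    obtain ⟨hc, hcomb⟩ := key hp hq ha hb hab
    refine ⟨by simpa using hc, ?_⟩
    simp only [Prod.fst_add, Prod.snd_add, Prod.smul_fst, Prod.smul_snd, smul_eq_mul]
    rw [hcomb]
    exact hf.1 hps hqs (by positivity) (by positivity) (by field_simp)
  · rintro p ⟨hp, hps⟩ q ⟨hq, hqs⟩ a b ha hb hab
    obtain ⟨hc, hcomb⟩ := key hp hq ha hb hab
    simp only [Prod.fst_add, Prod.snd_add, Prod.smul_fst, Prod.smul_snd, smul_eq_mul]
    rw [hcomb]
    have hconv := hf.2 hps hqs (by positivity : 0 ≤ a * p.2 / (a * p.2 + b * q.2))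
      (by positivity : 0 ≤ b * q.2 / (a * p.2 + b * q.2)) (by field_simp)
    calc (a * p.2 + b * q.2) * f _
        ≤ (a * p.2 + b * q.2) * ((a * p.2 / (a * p.2 + b * q.2)) * f (p.2⁻¹ • p.1) +
            (b * q.2 / (a * p.2 + b * q.2)) * f (q.2⁻¹ • q.1)) := by
          gcongr; exact hconv
      _ = a * (p.2 * f (p.2⁻¹ • p.1)) + b * (q.2 * f (q.2⁻¹ • q.1)) := by
          field_simp

theorem convexOn_rpow_mul_rpow_one_sub {γ : ℝ} (hγ : 1 ≤ γ) :
    ConvexOn ℝ (Ici 0 ×ˢ Ioi 0) (fun p : ℝ × ℝ => p.1 ^ γ * p.2 ^ (1 - γ)) := by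
  have hdom : {p : ℝ × ℝ | 0 < p.2 ∧ p.2⁻¹ • p.1 ∈ Ici 0} = Ici 0 ×ˢ Ioi 0 := by
    ext ⟨r, c⟩
    show (0 < c ∧ 0 ≤ c⁻¹ * r) ↔ (0 ≤ r ∧ 0 < c)
    constructor
    · rintro ⟨hc, hr⟩
      exact ⟨(mul_nonneg_iff_of_pos_left (inv_pos.2 hc)).1 hr, hc⟩
    · rintro ⟨hr, hc⟩
      exact ⟨hc, by positivity⟩
  have hpersp := (convexOn_rpow hγ).perspective
  rw [hdom] at hpersp
  refine hpersp.congr ?_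
  rintro ⟨r, c⟩ ⟨hr, hc : 0 < c⟩
  change c * (c⁻¹ • r) ^ γ = r ^ γ * c ^ (1 - γ)
  rw [smul_eq_mul, Real.mul_rpow (inv_nonneg.2 hc.le) hr, Real.inv_rpow hc.le, Real.rpow_sub hc,
    Real.rpow_one]
  field_simp

theorem ConvexOn.rpow_mul_rpow_one_sub {E : Type*} [AddCommGroup E] [Module ℝ E] {s : Set E}
    {φ χ : E → ℝ} {γ : ℝ} (hγ : 1 ≤ γ) (hφ : ConvexOn ℝ s φ) (hφ0 : ∀ x ∈ s, 0 ≤ φ x)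
    (hχ : ConcaveOn ℝ s χ) (hχ0 : ∀ x ∈ s, 0 < χ x) :
    ConvexOn ℝ s (fun x => φ x ^ γ * χ x ^ (1 - γ)) := by
  refine ⟨hφ.1, fun x hx y hy a b ha hb hab => ?_⟩
  have hz := hφ.1 hx hy ha hb hab
  have hφab : 0 ≤ a • φ x + b • φ y :=
    add_nonneg (smul_nonneg ha (hφ0 x hx)) (smul_nonneg hb (hφ0 y hy))
  have hχab : 0 < a • χ x + b • χ y := (convex_Ioi (0 : ℝ)) (hχ0 x hx) (hχ0 y hy) ha hb hab
  have hP := (convexOn_rpow_mul_rpow_one_sub hγ).2 (x := (φ x, χ x)) (y := (φ y, χ y))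
    ⟨hφ0 x hx, hχ0 x hx⟩ ⟨hφ0 y hy, hχ0 y hy⟩ ha hb hab
  simp only [Prod.fst_add, Prod.snd_add, Prod.smul_fst, Prod.smul_snd] at hP
  calc φ (a • x + b • y) ^ γ * χ (a • x + b • y) ^ (1 - γ)
      ≤ (a • φ x + b • φ y) ^ γ * (a • χ x + b • χ y) ^ (1 - γ) :=
        mul_le_mul (Real.rpow_le_rpow (hφ0 _ hz) (hφ.2 hx hy ha hb hab) (by linarith))
          (Real.rpow_le_rpow_of_nonpos hχab (hχ.2 hx hy ha hb hab) (by linarith))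
          (Real.rpow_nonneg (hχ0 _ hz).le _) (Real.rpow_nonneg hφab _)
    _ ≤ _ := hP

theorem concaveOn_one_sub_sq_rpow {β : ℝ} (hβ0 : 0 ≤ β) (hβ1 : β ≤ 1) :
    ConcaveOn ℝ (Icc (-1) 1) (fun t : ℝ => (1 - t ^ 2) ^ β) := by
  refine ⟨convex_Icc _ _, fun s hs t ht a b ha hb hab => ?_⟩
  have hs' : 0 ≤ 1 - s ^ 2 := by nlinarith [hs.1, hs.2]
  have ht' : 0 ≤ 1 - t ^ 2 := by nlinarith [ht.1, ht.2]
  have hmid : a • (1 - s ^ 2) + b • (1 - t ^ 2) ≤ 1 - (a • s + b • t) ^ 2 := by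
    obtain rfl : b = 1 - a := by linarith
    simp only [smul_eq_mul]
    nlinarith [mul_nonneg (mul_nonneg ha hb) (sq_nonneg (s - t))]
  calc a • (1 - s ^ 2) ^ β + b • (1 - t ^ 2) ^ β ≤ (a • (1 - s ^ 2) + b • (1 - t ^ 2)) ^ β :=
        (Real.concaveOn_rpow hβ0 hβ1).2 hs' ht' ha hb hab
    _ ≤ (1 - (a • s + b • t) ^ 2) ^ β := Real.rpow_le_rpow (by positivity) hmid hβ0

theorem one_lt_two_sub_two_div {n : ℕ} (hn : 3 ≤ n) : 1 < 2 - 2 / (n : ℝ) := by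
  have : (2 : ℝ) / n < 1 := by
    rw [div_lt_one (by positivity)]
    exact_mod_cast (by omega : 2 < n)
  linarith

theorem hPog_eq_rpow_rpow {α γ t : ℝ} (hγ : γ ≠ 1) (ht : 0 ≤ 1 - t ^ 2) :
    hPog α t = ((1 - t ^ 2) ^ (α / (γ - 1))) ^ (1 - γ) := by
  rw [hPog, ← Real.rpow_mul ht]
  congr 1
  field_simp [sub_ne_zero.2 hγ]
  ring

def dropLast (n : ℕ) : EuclideanSpace ℝ (Fin n) →ₗ[ℝ] EuclideanSpace ℝ (Fin n) where
  toFun x := WithLp.toLp 2 (fun i => if (i : ℕ) = n - 1 then 0 else x i)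
  map_add' x y := by ext i; by_cases h : (i : ℕ) = n - 1 <;> simp [h]
  map_smul' c x := by ext i; by_cases h : (i : ℕ) = n - 1 <;> simp [h]

theorem primeNorm_eq_norm_dropLast (n : ℕ) (x : EuclideanSpace ℝ (Fin n)) :
    primeNorm n x = ‖dropLast n x‖ := by
  rw [EuclideanSpace.norm_eq, primeNorm]
  congr 1
  refine Finset.sum_congr rfl fun i _ => ?_
  by_cases h : (i : ℕ) = n - 1 <;> simp [dropLast, h]

theorem primeNorm_nonneg (n : ℕ) (x : EuclideanSpace ℝ (Fin n)) : 0 ≤ primeNorm n x :=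
  Real.sqrt_nonneg _

theorem convexOn_primeNorm (n : ℕ) : ConvexOn ℝ univ (primeNorm n) := by
  have h : primeNorm n = norm ∘ dropLast n := funext (primeNorm_eq_norm_dropLast n)
  rw [h]
  exact (convexOn_norm convex_univ).comp_linearMap (dropLast n)

theorem primeNorm_eq_zero {n : ℕ} {x : EuclideanSpace ℝ (Fin n)}
    (hx : ∀ i : Fin n, (i : ℕ) ≠ n - 1 → x i = 0) : primeNorm n x = 0 := by
  rw [primeNorm, Finset.sum_eq_zero, Real.sqrt_zero]
  intro i _
  split_ifs with h
  · rfl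
  · simp [hx i h]

theorem convex_XPog (n : ℕ) (hn : 3 ≤ n) : Convex ℝ (XPog n hn) :=
  (convex_Ioo (-1 : ℝ) 1).linear_preimage (EuclideanSpace.projₗ _)

theorem convexOn_uPog {n : ℕ} (hn : 3 ≤ n) {α : ℝ} (hα0 : 0 ≤ α)
    (hα1 : α ≤ (2 - 2 / (n : ℝ)) - 1) : ConvexOn ℝ (XPog n hn) (uPog n hn α) := by
  set γ := 2 - 2 / (n : ℝ)
  have hγ : 1 < γ := one_lt_two_sub_two_div hn
  set β := α / (γ - 1)
  have hβ0 : 0 ≤ β := div_nonneg hα0 (by linarith)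
  have hβ1 : β ≤ 1 := (div_le_one (by linarith)).2 hα1
  have hψ : ConcaveOn ℝ (XPog n hn) (fun x => (1 - lastCoord n hn x ^ 2) ^ β) :=
    ((concaveOn_one_sub_sq_rpow hβ0 hβ1).subset Ioo_subset_Icc_self
      (convex_Ioo _ _)).comp_linearMap (EuclideanSpace.projₗ _)
  refine (((convexOn_primeNorm n).subset (subset_univ _) (convex_XPog n hn)).rpow_mul_rpow_one_sub
    hγ.le (fun x _ => primeNorm_nonneg n x) hψ
    (fun x hx => Real.rpow_pos_of_pos (by nlinarith [hx.1, hx.2]) _)).congr fun x hx => ?_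
  have hx' : 0 ≤ 1 - lastCoord n hn x ^ 2 := by nlinarith [hx.1, hx.2]
  rw [uPog, hPog_eq_rpow_rpow hγ.ne' hx']

theorem uPog_eq_zero {n : ℕ} (hn : 3 ≤ n) (α : ℝ) {x : EuclideanSpace ℝ (Fin n)}
    (hx : ∀ i : Fin n, (i : ℕ) ≠ n - 1 → x i = 0) : uPog n hn α x = 0 := by
  rw [uPog, primeNorm_eq_zero hx, Real.zero_rpow (by linarith [one_lt_two_sub_two_div hn]),
    zero_mul]

theorem uPog_nonneg {n : ℕ} (hn : 3 ≤ n) (α : ℝ) {x : EuclideanSpace ℝ (Fin n)}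
    (hx : x ∈ XPog n hn) : 0 ≤ uPog n hn α x :=
  mul_nonneg (Real.rpow_nonneg (primeNorm_nonneg n x) _)
    (Real.rpow_nonneg (by nlinarith [hx.1, hx.2]) _)

theorem isMinOn_uPog {n : ℕ} (hn : 3 ≤ n) (α : ℝ) {x : EuclideanSpace ℝ (Fin n)}
    (hx : ∀ i : Fin n, (i : ℕ) ≠ n - 1 → x i = 0) : IsMinOn (uPog n hn α) (XPog n hn) x :=
  fun _ hy => by
    rw [uPog_eq_zero hn α hx]
    exact uPog_nonneg hn α hy

/-- **Appendix: the Pogorelov-type example, convexity and failure of strict convexity.**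
For `n ≥ 3`, `γ = 2 − 2/n` and `0 < α < γ − 1`, the function `u(x', x_n) = |x'|^γ (1 − x_n²)^{−α}`
is convex on `X = ℝ^{n−1} × (−1, 1)`, vanishes identically on the segment `{0} × (−1, 1)`,
and in particular is not strictly convex on `X`. -/
theorem pogorelov_example_convex_not_strictly_convex
    (n : ℕ) (hn : 3 ≤ n) (α : ℝ) (hα0 : 0 < α) (hα1 : α < (2 - 2 / (n : ℝ)) - 1) :
    ConvexOn ℝ (XPog n hn) (uPog n hn α) ∧
    (∀ x ∈ XPog n hn, (∀ i : Fin n, (i : ℕ) ≠ n - 1 → x i = 0) → uPog n hn α x = 0) ∧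
    ¬ StrictConvexOn ℝ (XPog n hn) (uPog n hn α) := by
  refine ⟨convexOn_uPog hn hα0.le hα1.le, fun x _ hx => uPog_eq_zero hn α hx, fun hstrict => ?_⟩
  set e := EuclideanSpace.single (⟨n - 1, by omega⟩ : Fin n) (1 / 2 : ℝ)
  have he_axis : ∀ i : Fin n, (i : ℕ) ≠ n - 1 → e i = 0 := fun i hi => by
    simp [e, Fin.ext_iff, hi]
  have he_last : lastCoord n hn e = 1 / 2 := by simp [e, lastCoord]
  have he_mem : e ∈ XPog n hn := by
    change lastCoord n hn e ∈ Ioo (-1) 1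
    rw [he_last]; norm_num
  have h0_mem : (0 : EuclideanSpace ℝ (Fin n)) ∈ XPog n hn := by
    change (0 : ℝ) ∈ Ioo (-1) 1; norm_num
  have h0e := hstrict.eq_of_isMinOn (isMinOn_uPog hn α fun _ _ => rfl)
    (isMinOn_uPog hn α he_axis) h0_mem he_mem
  have := congrArg (lastCoord n hn) h0e
  rw [he_last] at this
  norm_num [lastCoord] at this
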